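/- arXiv:1906.02842 — 5 statements merged into one kernel-verified Lean document; each statement's English description precedes it below -/
import Mathlib

section
/- The composition of two rational relations on free monoids is a rational relation: if R' ⊆ A* × B* and R ⊆ B* × C* are rational subsets of the respective product monoids, then R ∘ R' = {(u,v) | ∃m ∈ B*, (u,m) ∈ R' ∧ (m,v) ∈ R} is a rational subset of A* × C*. -/
/-!
Kleene's theorem holds in any monoid: a set is rational iff it is the set of labels of walks
between initial and final states of a finite automaton with finitely many edge labels. Labels
can moreover be taken from any generating set containing `1`, and `A* × B*` is generated by the
pairs of words of length at most one. Given such automata for `R'` and `R`, run them in parallel: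
the first moves alone when it writes nothing on `B`, the second moves alone when it reads nothing
from `B`, and both move together when the first writes the letter of `B` that the second reads.
Because each edge carries at most one letter of `B`, every pair of walks that agree on the middle
word can be interleaved this way, so the product automaton accepts exactly `R' ○ R`.
-/

open scoped Pointwise

/-- Rational subsets of a monoid: smallest family containing finite subsets and closed
under union, product and submonoid generation (star). -/
inductive IsRational {M : Type} [Monoid M] : Set M → Prop
  | finite (s : Set M) : s.Finite → IsRational s
  | union (s t : Set M) : IsRational s → IsRational t → IsRational (s ∪ t)
  | mul (s t : Set M) : IsRational s → IsRational t → IsRational (s * t)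
  | star (s : Set M) : IsRational s → IsRational (Submonoid.closure s : Set M)

open scoped SetRel

theorem IsRational.biUnion {M : Type} [Monoid M] {ι : Type*} {s : Set ι} (hs : s.Finite)
    {f : ι → Set M} (hf : ∀ i ∈ s, IsRational (f i)) : IsRational (⋃ i ∈ s, f i) := by
  induction s, hs using Set.Finite.induction_on with
  | empty => simpa using IsRational.finite ∅ Set.finite_empty
  | @insert a s _ _ ih =>
    rw [Set.biUnion_insert]
    exact .union _ _ (hf a (Set.mem_insert a s))
      (ih fun i hi => hf i (Set.mem_insert_of_mem a hi))

namespace MonoidAutomaton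

variable {M : Type} [Monoid M] {Q : Type}

inductive Walk (E : Q → M → Q → Prop) : Q → Q → M → Prop
  | nil (p : Q) : Walk E p p 1
  | cons {p q r : Q} {m n : M} : E p m q → Walk E q r n → Walk E p r (m * n)

def lang (E : Q → M → Q → Prop) (I F : Set Q) : Set M :=
  {m | ∃ i ∈ I, ∃ f ∈ F, Walk E i f m}

namespace Walk

variable {E : Q → M → Q → Prop} {p q r : Q} {m n : M}

theorem cast (h : Walk E p q m) (hm : m = n) : Walk E p q n := hm ▸ h

theorem single (e : E p m q) : Walk E p q m := (cons e (nil q)).cast (mul_one m)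

theorem append (h₁ : Walk E p q m) (h₂ : Walk E q r n) : Walk E p r (m * n) := by
  induction h₁ with
  | nil => exact h₂.cast (one_mul n).symm
  | cons e _ ih => exact (cons e (ih h₂)).cast (mul_assoc _ _ _).symm

theorem map {Q' : Type} {E' : Q' → M → Q' → Prop} (f : Q → Q')
    (hf : ∀ p m q, E p m q → E' (f p) m (f q)) (h : Walk E p q m) : Walk E' (f p) (f q) m := by
  induction h with
  | nil => exact nil _
  | cons e _ ih => exact cons (hf _ _ _ e) ih

end Walk

/-- Walks whose intermediate states lie in `S`; the endpoints need not. -/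
inductive WalkVia (E : Q → M → Q → Prop) (S : Set Q) : Q → Q → M → Prop
  | nil (p : Q) : WalkVia E S p p 1
  | single {p q : Q} {m : M} : E p m q → WalkVia E S p q m
  | cons {p q r : Q} {m n : M} : E p m q → q ∈ S → WalkVia E S q r n → WalkVia E S p r (m * n)

namespace WalkVia

variable {E : Q → M → Q → Prop} {S T : Set Q} {p q r : Q} {m n : M}

theorem cast (h : WalkVia E S p q m) (hm : m = n) : WalkVia E S p q n := hm ▸ h

theorem mono (hST : S ⊆ T) (h : WalkVia E S p q m) : WalkVia E T p q m := by
  induction h with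
  | nil => exact nil _
  | single e => exact single e
  | cons e hq _ ih => exact cons e (hST hq) ih

theorem append (h₁ : WalkVia E S p q m) (h₂ : WalkVia E S q r n) :
    WalkVia E (insert q S) p r (m * n) := by
  induction h₁ with
  | nil => exact (h₂.mono (Set.subset_insert _ _)).cast (one_mul n).symm
  | single e => exact cons e (Set.mem_insert _ _) (h₂.mono (Set.subset_insert _ _))
  | cons e hq _ ih =>
    exact (cons e (Set.mem_insert_of_mem _ hq) (ih h₂)).cast (mul_assoc _ _ _).symm

end WalkVia

theorem walk_iff_walkVia_univ {E : Q → M → Q → Prop} {p q : Q} {m : M} :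
    Walk E p q m ↔ WalkVia E Set.univ p q m := by
  constructor <;> intro h
  · induction h with
    | nil => exact .nil _
    | cons e _ ih => exact .cons e trivial ih
  · induction h with
    | nil => exact .nil _
    | single e => exact .single e
    | cons e _ _ ih => exact .cons e ih

def viaLang (E : Q → M → Q → Prop) (S : Set Q) (p q : Q) : Set M := {m | WalkVia E S p q m}

section viaLang

variable (E : Q → M → Q → Prop) (S : Set Q) (p q r : Q)

theorem viaLang_insert_subset :
    viaLang E (insert r S) p q ⊆
      viaLang E S p q ∪ viaLang E S p r * (Submonoid.closure (viaLang E S r r) : Set M) *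
        viaLang E S r q := by
  intro m h
  induction h with
  | nil => exact .inl (.nil _)
  | single e => exact .inl (.single e)
  | @cons p s _ l _ e hs _ ih =>
    rcases ih with ih | ⟨_, ⟨x, hx, y, hy, rfl⟩, z, hz, rfl⟩ <;> rcases hs with rfl | hs
    · exact .inr ⟨l * 1, ⟨l, .single e, 1, one_mem _, rfl⟩, _, ih, by rw [mul_one]⟩
    · exact .inl (.cons e hs ih)
    · refine .inr ⟨l * (x * y), ⟨l, .single e, x * y, ?_, rfl⟩, z, hz, by simp only [mul_assoc]⟩
      exact mul_mem (Submonoid.subset_closure hx) hy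
    · exact .inr ⟨l * x * y, ⟨l * x, .cons e hs hx, y, hy, rfl⟩, z, hz, by simp only [mul_assoc]⟩

theorem closure_viaLang_subset :
    (Submonoid.closure (viaLang E S r r) : Set M) ⊆ viaLang E (insert r S) r r := fun _ h =>
  Submonoid.closure_induction (fun _ hm => WalkVia.mono (Set.subset_insert r S) hm) (.nil r)
    (fun _ _ _ _ hx hy => (hx.append hy).mono (Set.insert_idem r S).le) h

theorem viaLang_insert :
    viaLang E (insert r S) p q =
      viaLang E S p q ∪ viaLang E S p r * (Submonoid.closure (viaLang E S r r) : Set M) *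
        viaLang E S r q := by
  refine (viaLang_insert_subset E S p q r).antisymm (Set.union_subset ?_ ?_)
  · exact fun _ h => WalkVia.mono (Set.subset_insert r S) h
  · rintro _ ⟨_, ⟨x, hx, y, hy, rfl⟩, z, hz, rfl⟩
    have hxy := (WalkVia.mono (Set.subset_insert r S) hx).append
      (closure_viaLang_subset E S r hy)
    rw [Set.insert_idem] at hxy
    have := hxy.append (WalkVia.mono (Set.subset_insert r S) hz)
    rwa [Set.insert_idem] at this

theorem viaLang_empty_subset : viaLang E ∅ p q ⊆ insert 1 {m | ∃ p q, E p m q} := by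
  rintro m (_ | e | ⟨_, hq, _⟩)
  exacts [Set.mem_insert _ _, Set.mem_insert_of_mem _ ⟨_, _, e⟩, absurd hq (Set.notMem_empty _)]

end viaLang

section Kleene

variable {E : Q → M → Q → Prop} (hE : {m | ∃ p q, E p m q}.Finite)
include hE

theorem isRational_viaLang {S : Set Q} (hS : S.Finite) (p q : Q) :
    IsRational (viaLang E S p q) := by
  induction S, hS using Set.Finite.induction_on generalizing p q with
  | empty => exact .finite _ ((hE.insert 1).subset (viaLang_empty_subset E p q))
  | @insert r S _ _ ih =>
    rw [viaLang_insert]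
    exact .union _ _ (ih p q) (.mul _ _ (.mul _ _ (ih p r) (.star _ (ih r r))) (ih r q))

theorem isRational_lang [Finite Q] (I F : Set Q) : IsRational (lang E I F) := by
  have : lang E I F = ⋃ i ∈ I, ⋃ f ∈ F, viaLang E Set.univ i f := by
    ext m
    simp [lang, viaLang, walk_iff_walkVia_univ]
  rw [this]
  exact .biUnion I.toFinite fun i _ => .biUnion F.toFinite fun f _ =>
    isRational_viaLang hE Set.finite_univ i f

end Kleene

def IsAccepted (G s : Set M) : Prop :=
  ∃ (Q : Type) (_ : Finite Q) (E : Q → M → Q → Prop) (I F : Set Q),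
    (∀ p m q, E p m q → m ∈ G) ∧ lang E I F = s

section Sum

variable {Q₁ Q₂ : Type}

def sumEdge (E₁ : Q₁ → M → Q₁ → Prop) (E₂ : Q₂ → M → Q₂ → Prop) (B : Q₁ → M → Q₂ → Prop) :
    Q₁ ⊕ Q₂ → M → Q₁ ⊕ Q₂ → Prop
  | .inl p, m, .inl q => E₁ p m q
  | .inr p, m, .inr q => E₂ p m q
  | .inl p, m, .inr q => B p m q
  | .inr _, _, .inl _ => False

def SumWalk (E₁ : Q₁ → M → Q₁ → Prop) (E₂ : Q₂ → M → Q₂ → Prop) (B : Q₁ → M → Q₂ → Prop) :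
    Q₁ ⊕ Q₂ → Q₁ ⊕ Q₂ → M → Prop
  | .inl p, .inl q, m => Walk E₁ p q m
  | .inr p, .inr q, m => Walk E₂ p q m
  | .inl p, .inr q, m => ∃ p' q' m₁ b m₂,
      Walk E₁ p p' m₁ ∧ B p' b q' ∧ Walk E₂ q' q m₂ ∧ m = m₁ * (b * m₂)
  | .inr _, .inl _, _ => False

variable {E₁ : Q₁ → M → Q₁ → Prop} {E₂ : Q₂ → M → Q₂ → Prop} {B : Q₁ → M → Q₂ → Prop}

theorem walk_sumEdge_iff {x y : Q₁ ⊕ Q₂} {m : M} :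
    Walk (sumEdge E₁ E₂ B) x y m ↔ SumWalk E₁ E₂ B x y m := by
  constructor
  · intro h
    induction h with
    | nil x => cases x <;> exact .nil _
    | @cons x x' y l n e _ ih =>
      match x, x', y, e, ih with
      | .inl _, .inl _, .inl _, e, ih => exact .cons e ih
      | .inl _, .inl _, .inr _, e, ⟨p', q', m₁, b, m₂, w₁, hb, w₂, hn⟩ =>
        exact ⟨p', q', l * m₁, b, m₂, .cons e w₁, hb, w₂, by rw [hn, mul_assoc]⟩
      | .inl p, .inr q, .inr _, e, ih => exact ⟨p, q, 1, l, n, .nil p, e, ih, (one_mul _).symm⟩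
      | .inr _, .inr _, .inr _, e, ih => exact .cons e ih
      | .inr _, .inr _, .inl _, _, ih => exact ih.elim
      | .inr _, .inl _, _, e, _ => exact e.elim
      | .inl _, .inr _, .inl _, _, ih => exact ih.elim
  · intro h
    match x, y, h with
    | .inl _, .inl _, h => exact h.map Sum.inl fun _ _ _ e => e
    | .inr _, .inr _, h => exact h.map Sum.inr fun _ _ _ e => e
    | .inl _, .inr _, ⟨p', q', m₁, b, m₂, w₁, hb, w₂, hm⟩ =>
      exact hm ▸ (w₁.map Sum.inl fun _ _ _ e => e).append
        (.cons (show sumEdge E₁ E₂ B (.inl p') b (.inr q') from hb)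
          (w₂.map Sum.inr fun _ _ _ e => e))

end Sum

variable {G : Set M}

theorem IsAccepted.union {s t : Set M} (hs : IsAccepted G s) (ht : IsAccepted G t) :
    IsAccepted G (s ∪ t) := by
  obtain ⟨Q₁, _, E₁, I₁, F₁, hE₁, rfl⟩ := hs
  obtain ⟨Q₂, _, E₂, I₂, F₂, hE₂, rfl⟩ := ht
  refine ⟨Q₁ ⊕ Q₂, inferInstance, sumEdge E₁ E₂ fun _ _ _ => False,
    .inl '' I₁ ∪ .inr '' I₂, .inl '' F₁ ∪ .inr '' F₂, ?_, ?_⟩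
  · rintro (p | p) m (q | q) e
    exacts [hE₁ p m q e, e.elim, e.elim, hE₂ p m q e]
  · ext m
    simp [lang, walk_sumEdge_iff, SumWalk]

theorem IsAccepted.mul {s t : Set M} (hG : 1 ∈ G) (hs : IsAccepted G s) (ht : IsAccepted G t) :
    IsAccepted G (s * t) := by
  obtain ⟨Q₁, _, E₁, I₁, F₁, hE₁, rfl⟩ := hs
  obtain ⟨Q₂, _, E₂, I₂, F₂, hE₂, rfl⟩ := ht
  refine ⟨Q₁ ⊕ Q₂, inferInstance, sumEdge E₁ E₂ fun p m q => p ∈ F₁ ∧ q ∈ I₂ ∧ m = 1,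
    .inl '' I₁, .inr '' F₂, ?_, ?_⟩
  · rintro (p | p) m (q | q) e
    exacts [hE₁ p m q e, e.2.2 ▸ hG, e.elim, hE₂ p m q e]
  · ext m
    simp only [lang, Set.mem_image, Set.mem_ofPred_eq, Set.mem_mul]
    constructor
    · rintro ⟨_, ⟨i, hi, rfl⟩, _, ⟨f, hf, rfl⟩, h⟩
      obtain ⟨p, q, m₁, b, m₂, w₁, ⟨hp, hq, rfl⟩, w₂, rfl⟩ := walk_sumEdge_iff.1 h
      exact ⟨m₁, ⟨i, hi, p, hp, w₁⟩, m₂, ⟨q, hq, f, hf, w₂⟩, by rw [one_mul]⟩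
    · rintro ⟨m₁, ⟨i, hi, p, hp, w₁⟩, m₂, ⟨q, hq, f, hf, w₂⟩, rfl⟩
      exact ⟨_, ⟨i, hi, rfl⟩, _, ⟨f, hf, rfl⟩,
        walk_sumEdge_iff.2 ⟨p, q, m₁, 1, m₂, w₁, ⟨hp, hq, rfl⟩, w₂, by rw [one_mul]⟩⟩

def starEdge (E : Q → M → Q → Prop) (I F : Set Q) : Option Q → M → Option Q → Prop
  | some p, m, some q => E p m q
  | none, m, some q => q ∈ I ∧ m = 1
  | some p, m, none => p ∈ F ∧ m = 1
  | none, _, none => False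

theorem mem_of_walk_starEdge {E : Q → M → Q → Prop} {I F : Set Q} {x : Option Q} {m : M}
    (h : Walk (starEdge E I F) x none m) :
    m ∈ x.elim (Submonoid.closure (lang E I F) : Set M)
      fun p => lang E {p} F * (Submonoid.closure (lang E I F) : Set M) := by
  generalize hy : none = y at h
  induction h with
  | nil => subst hy; exact one_mem _
  | @cons x x' y l n e w ih =>
    match x, x', e, ih hy with
    | none, some i, ⟨hi, hl⟩, ⟨m₁, ⟨_, rfl, f, hf, w₁⟩, m₂, hm₂, hn⟩ =>
      rw [hl, one_mul, ← hn]
      exact mul_mem (Submonoid.subset_closure ⟨i, hi, f, hf, w₁⟩) hm₂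
    | some p, some _, e, ⟨m₁, ⟨_, rfl, f, hf, w₁⟩, m₂, hm₂, hn⟩ =>
      exact ⟨l * m₁, ⟨p, rfl, f, hf, .cons e w₁⟩, m₂, hm₂, (mul_assoc _ _ _).trans (hn ▸ rfl)⟩
    | some p, none, ⟨hp, hl⟩, hn => exact ⟨1, ⟨p, rfl, p, hp, .nil p⟩, n, hn, by rw [hl]⟩
    | none, none, e, _ => exact e.elim

theorem IsAccepted.star {s : Set M} (hG : 1 ∈ G) (hs : IsAccepted G s) :
    IsAccepted G (Submonoid.closure s) := by
  obtain ⟨Q, _, E, I, F, hE, rfl⟩ := hs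
  refine ⟨Option Q, inferInstance, starEdge E I F, {none}, {none}, ?_, ?_⟩
  · rintro (_ | p) m (_ | q) e
    exacts [e.elim, e.2 ▸ hG, e.2 ▸ hG, hE p m q e]
  · refine (Set.Subset.antisymm ?_ fun m hm => ⟨none, rfl, none, rfl, ?_⟩)
    · rintro m ⟨_, rfl, _, rfl, h⟩
      exact mem_of_walk_starEdge h
    · induction hm using Submonoid.closure_induction with
      | mem m hm =>
        obtain ⟨i, hi, f, hf, w⟩ := hm
        have := Walk.cons (show starEdge E I F none 1 (some i) from ⟨hi, rfl⟩)
          ((w.map some fun _ _ _ e => e).append (.single (show starEdge E I F (some f) 1 none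
            from ⟨hf, rfl⟩)))
        rwa [one_mul, mul_one] at this
      | one => exact .nil none
      | mul _ _ _ _ hx hy => exact hx.append hy

theorem isAccepted_singleton {g : M} (hg : g ∈ G) : IsAccepted G {g} := by
  refine ⟨Bool, inferInstance, fun p m q => p = false ∧ q = true ∧ m = g, {false}, {true},
    fun _ _ _ e => e.2.2 ▸ hg, Set.eq_singleton_iff_unique_mem.2 ⟨?_, ?_⟩⟩
  · exact ⟨false, rfl, true, rfl, .single ⟨rfl, rfl, rfl⟩⟩
  · rintro m ⟨_, rfl, _, rfl, h⟩
    obtain _ | ⟨⟨-, rfl, rfl⟩, w⟩ := h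
    obtain _ | ⟨⟨h, -⟩, -⟩ := w
    exacts [mul_one _, Bool.noConfusion h]

theorem isAccepted_empty : IsAccepted G ∅ :=
  ⟨Empty, inferInstance, fun _ _ _ => False, ∅, ∅, fun _ _ _ e => e.elim, by simp [lang]⟩

section OfRational

variable (hG : 1 ∈ G)
include hG

theorem isAccepted_singleton_of_mem_closure {x : M} (hx : x ∈ Submonoid.closure G) :
    IsAccepted G {x} := by
  induction hx using Submonoid.closure_induction with
  | mem g hg => exact isAccepted_singleton hg
  | one => exact isAccepted_singleton hG
  | mul x y _ _ hx hy => simpa only [Set.singleton_mul_singleton] using hx.mul hG hy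

variable (hGM : Submonoid.closure G = ⊤)
include hGM

theorem isAccepted_of_finite {s : Set M} (hs : s.Finite) : IsAccepted G s := by
  induction s, hs using Set.Finite.induction_on with
  | empty => exact isAccepted_empty
  | @insert a s _ _ ih =>
    rw [Set.insert_eq]
    exact (isAccepted_singleton_of_mem_closure hG (hGM ▸ Submonoid.mem_top a)).union ih

theorem _root_.IsRational.isAccepted {s : Set M} (h : IsRational s) : IsAccepted G s := by
  induction h with
  | finite s hs => exact isAccepted_of_finite hG hGM hs
  | union s t _ _ hs ht => exact hs.union ht
  | mul s t _ _ hs ht => exact hs.mul hG ht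
  | star s _ hs => exact hs.star hG

end OfRational

theorem IsAccepted.isRational (hG : G.Finite) {s : Set M} (h : IsAccepted G s) : IsRational s := by
  obtain ⟨Q, _, E, I, F, hE, rfl⟩ := h
  exact isRational_lang (hG.subset fun _ ⟨p, q, e⟩ => hE p _ q e) I F

end MonoidAutomaton

namespace FreeMonoid

variable {α β : Type}

theorem of_mul_inj {a b : α} {x y : FreeMonoid α} : of a * x = of b * y ↔ a = b ∧ x = y := by
  rw [← toList.injective.eq_iff]
  simp

def letters (α : Type) : Set (FreeMonoid α) := insert 1 (Set.range of)

theorem letters_finite [Finite α] : (letters α).Finite := (Set.finite_range of).insert 1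

theorem one_mem_letters : 1 ∈ letters α := Set.mem_insert 1 _

theorem one_mem_letters_prod : (1 : FreeMonoid α × FreeMonoid β) ∈ letters α ×ˢ letters β :=
  ⟨one_mem_letters, one_mem_letters⟩

theorem closure_letters : Submonoid.closure (letters α) = ⊤ := by
  rw [letters, Submonoid.closure_insert_one, closure_range_of]

theorem closure_letters_prod : Submonoid.closure (letters α ×ˢ letters β) = ⊤ := by
  rw [Submonoid.closure_prod one_mem_letters one_mem_letters, closure_letters, closure_letters,
    Submonoid.top_prod_top]

end FreeMonoid

namespace MonoidAutomaton

open FreeMonoid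

variable {A B C Q₁ Q₂ : Type}

def compEdge (E₁ : Q₁ → FreeMonoid A × FreeMonoid B → Q₁ → Prop)
    (E₂ : Q₂ → FreeMonoid B × FreeMonoid C → Q₂ → Prop)
    (x : Q₁ × Q₂) (w : FreeMonoid A × FreeMonoid C) (y : Q₁ × Q₂) : Prop :=
  (E₁ x.1 (w.1, 1) y.1 ∧ x.2 = y.2 ∧ w.2 = 1) ∨
  (E₂ x.2 (1, w.2) y.2 ∧ x.1 = y.1 ∧ w.1 = 1) ∨
  ∃ b, E₁ x.1 (w.1, of b) y.1 ∧ E₂ x.2 (of b, w.2) y.2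

variable {E₁ : Q₁ → FreeMonoid A × FreeMonoid B → Q₁ → Prop}
  {E₂ : Q₂ → FreeMonoid B × FreeMonoid C → Q₂ → Prop}

theorem Walk.exists_of_compEdge {x y : Q₁ × Q₂} {w : FreeMonoid A × FreeMonoid C}
    (h : Walk (compEdge E₁ E₂) x y w) :
    ∃ m, Walk E₁ x.1 y.1 (w.1, m) ∧ Walk E₂ x.2 y.2 (m, w.2) := by
  induction h with
  | nil => exact ⟨1, .nil _, .nil _⟩
  | @cons x x' y l n e _ ih =>
    obtain ⟨m, w₁, w₂⟩ := ih
    rcases e with ⟨e₁, hx, hl⟩ | ⟨e₂, hx, hl⟩ | ⟨b, e₁, e₂⟩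
    · exact ⟨m, (w₁.cons e₁).cast (by simp), (hx ▸ w₂).cast (by simp [hl])⟩
    · exact ⟨m, (hx ▸ w₁).cast (by simp [hl]), (w₂.cons e₂).cast (by simp)⟩
    · exact ⟨of b * m, (w₁.cons e₁).cast (by simp), (w₂.cons e₂).cast (by simp)⟩

theorem walk_compEdge_of_fst_eq_one {p q : Q₂} {y : FreeMonoid B × FreeMonoid C}
    (h : Walk E₂ p q y) (hy : y.1 = 1) (r : Q₁) :
    Walk (compEdge E₁ E₂) (r, p) (r, q) (1, y.2) := by
  induction h with
  | nil => exact .nil _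
  | @cons p p' q l n e _ ih =>
    obtain ⟨u, v⟩ := l
    obtain ⟨rfl, hn⟩ := mul_eq_one'.1 (show u * n.1 = 1 from hy)
    have e' : compEdge E₁ E₂ (r, p) (1, v) (r, p') := .inr (.inl ⟨e, rfl, rfl⟩)
    exact ((ih hn).cons e').cast (by simp)

theorem Walk.exists_split_of_fst_eq (hE₂ : ∀ p l q, E₂ p l q → l.1 ∈ letters B)
    {p q : Q₂} {y : FreeMonoid B × FreeMonoid C} (h : Walk E₂ p q y) {b : B}
    {t : FreeMonoid B} (hy : y.1 = of b * t) :
    ∃ r s v₁ c v₂, Walk E₂ p r (1, v₁) ∧ E₂ r (of b, c) s ∧ Walk E₂ s q (t, v₂) ∧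
      y.2 = v₁ * c * v₂ := by
  induction h with
  | nil => exact (of_ne_one b (mul_eq_one'.1 (show of b * t = 1 from hy.symm)).1).elim
  | @cons p p' q l n e w ih =>
    obtain ⟨u, v⟩ := l
    obtain rfl | ⟨b', rfl⟩ := hE₂ p _ p' e
    · obtain ⟨r, s, v₁, c, v₂, w₁, e', w₂, hn⟩ := ih (by simpa using hy)
      refine ⟨r, s, v * v₁, c, v₂, (w₁.cons e).cast (by simp), e', w₂, ?_⟩
      simp [hn, mul_assoc]
    · obtain ⟨rfl, rfl⟩ := of_mul_inj.1 (show of b' * n.1 = of b * t from hy)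
      exact ⟨p, p', 1, v, n.2, .nil p, e, w, by simp⟩

theorem walk_compEdge (hE₁ : ∀ p l q, E₁ p l q → l.2 ∈ letters B)
    (hE₂ : ∀ p l q, E₂ p l q → l.1 ∈ letters B) {p₁ q₁ : Q₁} {x : FreeMonoid A × FreeMonoid B}
    (h₁ : Walk E₁ p₁ q₁ x) {p₂ q₂ : Q₂} {y : FreeMonoid B × FreeMonoid C} (h₂ : Walk E₂ p₂ q₂ y)
    (hxy : x.2 = y.1) : Walk (compEdge E₁ E₂) (p₁, p₂) (q₁, q₂) (x.1, y.2) := by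
  induction h₁ generalizing p₂ y with
  | nil => exact walk_compEdge_of_fst_eq_one h₂ hxy.symm _
  | @cons p₁ p₁' q₁ l n e _ ih =>
    obtain ⟨u, v⟩ := l
    obtain rfl | ⟨b, rfl⟩ := hE₁ p₁ _ p₁' e
    · have e' : compEdge E₁ E₂ (p₁, p₂) (u, 1) (p₁', p₂) := .inl ⟨e, rfl, rfl⟩
      exact ((ih h₂ (by simpa using hxy)).cons e').cast (by simp)
    · obtain ⟨r, s, v₁, c, v₂, w₁, e₂, w₂, hy⟩ := h₂.exists_split_of_fst_eq hE₂ hxy.symm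
      have e' : compEdge E₁ E₂ (p₁, r) (u, c) (p₁', s) := .inr (.inr ⟨b, e, e₂⟩)
      exact ((walk_compEdge_of_fst_eq_one w₁ rfl p₁).append ((ih w₂ rfl).cons e')).cast
        (by simp [hy, mul_assoc])

theorem lang_comp_lang (hE₁ : ∀ p l q, E₁ p l q → l.2 ∈ letters B)
    (hE₂ : ∀ p l q, E₂ p l q → l.1 ∈ letters B) (I₁ F₁ : Set Q₁) (I₂ F₂ : Set Q₂) :
    lang E₁ I₁ F₁ ○ lang E₂ I₂ F₂ = lang (compEdge E₁ E₂) (I₁ ×ˢ I₂) (F₁ ×ˢ F₂) := by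
  ext ⟨u, v⟩
  constructor
  · rintro ⟨m, ⟨i₁, hi₁, f₁, hf₁, w₁⟩, ⟨i₂, hi₂, f₂, hf₂, w₂⟩⟩
    exact ⟨(i₁, i₂), ⟨hi₁, hi₂⟩, (f₁, f₂), ⟨hf₁, hf₂⟩, walk_compEdge hE₁ hE₂ w₁ w₂ rfl⟩
  · rintro ⟨i, hi, f, hf, w⟩
    obtain ⟨m, w₁, w₂⟩ := w.exists_of_compEdge
    exact ⟨m, ⟨i.1, hi.1, f.1, hf.1, w₁⟩, ⟨i.2, hi.2, f.2, hf.2, w₂⟩⟩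

theorem IsAccepted.comp {R' : Set (FreeMonoid A × FreeMonoid B)}
    {R : Set (FreeMonoid B × FreeMonoid C)} (h₁ : IsAccepted (letters A ×ˢ letters B) R')
    (h₂ : IsAccepted (letters B ×ˢ letters C) R) :
    IsAccepted (letters A ×ˢ letters C) (R' ○ R) := by
  obtain ⟨Q₁, _, E₁, I₁, F₁, hE₁, rfl⟩ := h₁
  obtain ⟨Q₂, _, E₂, I₂, F₂, hE₂, rfl⟩ := h₂
  refine ⟨Q₁ × Q₂, inferInstance, compEdge E₁ E₂, I₁ ×ˢ I₂, F₁ ×ˢ F₂, ?_,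
    (lang_comp_lang (fun p l q e => (hE₁ p l q e).2) (fun p l q e => (hE₂ p l q e).1) ..).symm⟩
  rintro x w y (⟨e, -, hw⟩ | ⟨e, -, hw⟩ | ⟨b, e₁, e₂⟩)
  · exact ⟨(hE₁ _ _ _ e).1, hw ▸ one_mem_letters⟩
  · exact ⟨hw ▸ one_mem_letters, (hE₂ _ _ _ e).2⟩
  · exact ⟨(hE₁ _ _ _ e₁).1, (hE₂ _ _ _ e₂).2⟩

end MonoidAutomaton

theorem isRational_comp_general {A B C : Type} [Finite A] [Finite C]
    (R' : Set (FreeMonoid A × FreeMonoid B)) (R : Set (FreeMonoid B × FreeMonoid C))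
    (h1 : IsRational R') (h2 : IsRational R) :
    IsRational {p : FreeMonoid A × FreeMonoid C |
      ∃ m : FreeMonoid B, (p.1, m) ∈ R' ∧ (m, p.2) ∈ R} := by
  open FreeMonoid MonoidAutomaton in
  have hR' := h1.isAccepted one_mem_letters_prod closure_letters_prod
  have hR := h2.isAccepted one_mem_letters_prod closure_letters_prod
  exact (hR'.comp hR).isRational (letters_finite.prod letters_finite)

/-- Elgot–Mezei: the composition of two rational relations is rational. -/
theorem isRational_comp {A B C : Type} [Finite A] [Finite B] [Finite C]
    (R' : Set (FreeMonoid A × FreeMonoid B)) (R : Set (FreeMonoid B × FreeMonoid C))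
    (h1 : IsRational R') (h2 : IsRational R) :
    IsRational {p : FreeMonoid A × FreeMonoid C |
      ∃ m : FreeMonoid B, (p.1, m) ∈ R' ∧ (m, p.2) ∈ R} :=
  isRational_comp_general R' R h1 h2
end

section
/- In a monoid M, the intersection of a recognizable subset and a rational subset is rational. -/
open scoped Pointwise

/-- A subset of a monoid is recognizable if it is saturated by a congruence of
finite index (equivalently, it is the preimage of a subset of a finite monoid
under a monoid homomorphism). -/
def IsRecognizable {M : Type} [Monoid M] (X : Set M) : Prop :=
  ∃ c : Con M, Finite c.Quotient ∧ X = c.mk' ⁻¹' (c.mk' '' X)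

/-! Let `φ : M →* N` with `N` finite (here `N = M/c`). By induction on a rational expression,
every `Y ∩ φ⁻¹{q}` is rational: unions and products split over the finitely many values of `φ`.
An element of a star `s*` with image `q` is the label of a path from `1` to `q` in the automaton
on `N` with transitions `p → p φ(u)`, `u ∈ s`; the McNaughton–Yamada construction, which admits
the states of `N` one at a time as intermediate states, expresses these labels rationally in
terms of the sets `s ∩ φ⁻¹{a}`. -/

section

variable {M N : Type} [Monoid M] [Monoid N]

namespace IsRational

theorem biUnion_s6 {ι : Type} {t : Set ι} (ht : t.Finite) {f : ι → Set M}
    (hf : ∀ i ∈ t, IsRational (f i)) : IsRational (⋃ i ∈ t, f i) := by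
  induction t, ht using Set.Finite.induction_on with
  | empty => simpa using IsRational.finite ∅ Set.finite_empty
  | @insert i t _ _ ih =>
    rw [Set.biUnion_insert]
    exact .union _ _ (hf i (t.mem_insert i)) (ih fun j hj => hf j (Set.mem_insert_of_mem i hj))

theorem inter_preimage_of_forall_singleton [Finite N] {s : Set M} {φ : M →* N}
    (hs : ∀ a, IsRational (s ∩ φ ⁻¹' {a})) (P : Set N) : IsRational (s ∩ φ ⁻¹' P) := by
  have hP : s ∩ φ ⁻¹' P = ⋃ a ∈ P, s ∩ φ ⁻¹' {a} := by ext; simp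
  rw [hP]
  exact biUnion_s6 P.toFinite fun a _ => hs a

end IsRational

theorem mul_inter_preimage_singleton (s t : Set M) (φ : M →* N) (q : N) :
    s * t ∩ φ ⁻¹' {q} = ⋃ a, (s ∩ φ ⁻¹' {a}) * (t ∩ φ ⁻¹' {b | a * b = q}) := by
  ext x
  simp only [Set.mem_inter_iff, Set.mem_mul, Set.mem_preimage, Set.mem_singleton_iff,
    Set.mem_iUnion, Set.mem_ofPred_eq]
  constructor
  · rintro ⟨⟨u, hu, v, hv, rfl⟩, hq⟩
    exact ⟨φ u, u, ⟨hu, rfl⟩, v, ⟨hv, by rw [← map_mul, hq]⟩, rfl⟩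
  · rintro ⟨a, u, ⟨hu, rfl⟩, v, ⟨hv, hq⟩, rfl⟩
    exact ⟨⟨u, hu, v, hv, rfl⟩, by rw [map_mul, hq]⟩

/-- `CayleyPath φ s S p q x`: `x = u₁ ⋯ uₖ` with `k ≥ 1` and all `uᵢ ∈ s`, such that the path
`p → p φ(u₁) → ⋯ → p φ(u₁ ⋯ uₖ) = q` has all its intermediate vertices in `S`. -/
inductive CayleyPath (φ : M →* N) (s : Set M) (S : Set N) : N → N → M → Prop
  | single {p u} : u ∈ s → CayleyPath φ s S p (p * φ u) u
  | cons {p q u x} : u ∈ s → p * φ u ∈ S → CayleyPath φ s S (p * φ u) q x →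
      CayleyPath φ s S p q (u * x)

namespace CayleyPath

variable {φ : M →* N} {s : Set M} {S T : Set N} {p q r : N} {x y : M}

theorem mul_map_eq (h : CayleyPath φ s S p q x) : p * φ x = q := by
  induction h with
  | single => rfl
  | cons _ _ _ ih => rw [map_mul, ← mul_assoc, ih]

theorem mem_closure (h : CayleyPath φ s S p q x) : x ∈ Submonoid.closure s := by
  induction h with
  | single hu => exact Submonoid.subset_closure hu
  | cons hu _ _ ih => exact mul_mem (Submonoid.subset_closure hu) ih

theorem mono (hST : S ⊆ T) (h : CayleyPath φ s S p q x) : CayleyPath φ s T p q x := by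
  induction h with
  | single hu => exact single hu
  | cons hu hS _ ih => exact cons hu (hST hS) ih

theorem trans (hx : CayleyPath φ s S p r x) (hr : r ∈ S) (hy : CayleyPath φ s S r q y) :
    CayleyPath φ s S p q (x * y) := by
  induction hx with
  | single hu => exact cons hu hr hy
  | cons hu hS _ ih => rw [mul_assoc]; exact cons hu hS (ih hr hy)

theorem mul_mem_closure (hx : CayleyPath φ s S p r x) (hr : r ∈ S) {m : M}
    (hm : m ∈ Submonoid.closure {y | CayleyPath φ s S r r y}) :
    CayleyPath φ s S p r (x * m) := by
  induction hm using Submonoid.closure_induction generalizing x with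
  | mem y hy => exact hx.trans hr hy
  | one => rwa [mul_one]
  | mul y z _ _ ihy ihz => rw [← mul_assoc]; exact ihz (ihy hx)

theorem setOf_empty (p q : N) :
    {x | CayleyPath φ s ∅ p q x} = s ∩ φ ⁻¹' {a | p * a = q} := by
  ext x
  constructor
  · rintro (hu | ⟨_, h, _⟩)
    · exact ⟨hu, rfl⟩
    · exact absurd h (Set.notMem_empty _)
  · rintro ⟨hx, rfl⟩
    exact single hx

/-- A path through `r` splits at its visits to `r`. -/
theorem setOf_insert (r p q : N) :
    {x | CayleyPath φ s (insert r S) p q x} =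
      {x | CayleyPath φ s S p q x} ∪ {x | CayleyPath φ s S p r x} *
        Submonoid.closure {x | CayleyPath φ s S r r x} * {x | CayleyPath φ s S r q x} := by
  refine Set.Subset.antisymm (fun x h => ?_)
    (Set.union_subset (fun x => mono (S.subset_insert r)) ?_)
  · induction h with
    | single hu => exact .inl (single hu)
    | @cons p q u x hu hS _ ih =>
      rcases hS, ih with ⟨rfl | hS, hx | ⟨_, ⟨a, ha, m, hm, rfl⟩, b, hb, rfl⟩⟩
      · exact .inr ⟨u * 1, ⟨u, single hu, 1, one_mem _, rfl⟩, x, hx, by rw [mul_one]⟩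
      · refine .inr ⟨u * (a * m), ⟨u, single hu, a * m, ?_, rfl⟩, b, hb, by simp only [mul_assoc]⟩
        exact mul_mem (Submonoid.subset_closure ha) hm
      · exact .inl (cons hu hS hx)
      · exact .inr ⟨u * a * m, ⟨u * a, cons hu hS ha, m, hm, rfl⟩, b, hb, by simp only [mul_assoc]⟩
  · rintro _ ⟨_, ⟨a, ha, m, hm, rfl⟩, b, hb, rfl⟩
    have hr := S.mem_insert r
    have hm' := Submonoid.closure_mono (fun y => mono (S.subset_insert r)) hm
    exact ((mono (S.subset_insert r) ha).mul_mem_closure hr hm').trans hr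
      (mono (S.subset_insert r) hb)

end CayleyPath

theorem isRational_setOf_cayleyPath [Finite N] {φ : M →* N} {s : Set M}
    (hs : ∀ a, IsRational (s ∩ φ ⁻¹' {a})) (S : Set N) (p q : N) :
    IsRational {x | CayleyPath φ s S p q x} := by
  induction S, S.toFinite using Set.Finite.induction_on generalizing p q with
  | empty =>
    rw [CayleyPath.setOf_empty]
    exact IsRational.inter_preimage_of_forall_singleton hs _
  | @insert r S _ _ ih =>
    rw [CayleyPath.setOf_insert]
    exact .union _ _ (ih p q) (.mul _ _ (.mul _ _ (ih p r) (.star _ (ih r r))) (ih r q))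

theorem closure_inter_preimage_singleton (φ : M →* N) (s : Set M) (q : N) :
    (Submonoid.closure s : Set M) ∩ φ ⁻¹' {q} =
      {x | CayleyPath φ s Set.univ 1 q x} ∪ {1} ∩ φ ⁻¹' {q} := by
  refine Set.Subset.antisymm ?_ (Set.union_subset ?_ ?_)
  · rintro x ⟨hx, rfl⟩
    suffices x = 1 ∨ ∀ p, CayleyPath φ s Set.univ p (p * φ x) x by
      rcases this with rfl | h
      · exact .inr ⟨rfl, rfl⟩
      · exact .inl (one_mul (φ x) ▸ h 1)
    induction hx using Submonoid.closure_induction_left with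
    | one => exact .inl rfl
    | mul_left u hu y _ ih =>
      refine .inr fun p => ?_
      rcases ih with rfl | h
      · simpa using CayleyPath.single hu
      · simpa [mul_assoc] using CayleyPath.cons hu (Set.mem_univ _) (h (p * φ u))
  · intro x hx
    exact ⟨hx.mem_closure, by simpa using hx.mul_map_eq⟩
  · rintro _ ⟨rfl, hq⟩
    exact ⟨one_mem _, hq⟩

theorem IsRational.inter_preimage_singleton [Finite N] {Y : Set M} (hY : IsRational Y)
    (φ : M →* N) (q : N) : IsRational (Y ∩ φ ⁻¹' {q}) := by
  induction hY generalizing q with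
  | finite s hs => exact .finite _ (hs.inter_of_left _)
  | union s t _ _ ihs iht =>
    rw [Set.union_inter_distrib_right]
    exact .union _ _ (ihs q) (iht q)
  | mul s t _ _ ihs iht =>
    rw [mul_inter_preimage_singleton, ← Set.biUnion_univ]
    exact .biUnion Set.finite_univ fun a _ =>
      .mul _ _ (ihs a) (.inter_preimage_of_forall_singleton iht _)
  | star s _ ihs =>
    rw [closure_inter_preimage_singleton]
    exact .union _ _ (isRational_setOf_cayleyPath ihs _ 1 q)
      (.finite _ ((Set.finite_singleton 1).inter_of_left _))

end

/-- The intersection of a recognizable subset and a rational subset is rational. -/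
theorem isRational_inter_recognizable {M : Type} [Monoid M] (X Y : Set M)
    (hX : IsRecognizable X) (hY : IsRational Y) : IsRational (X ∩ Y) := by
  obtain ⟨c, _, hX⟩ := hX
  rw [hX, Set.inter_comm]
  exact .inter_preimage_of_forall_singleton (hY.inter_preimage_singleton c.mk') _
end

section
/- Let T ⊆ A* × A* be a relation such that (u,v) ∈ T implies |u| = |v|. Identifying each such pair with a word over the alphabet A × A via the canonical embedding (A × A)* → A* × A*, if T is a rational subset of A* × A*, then T is a rational subset of (A × A)*. -/
/-!
One proves more, by induction on rational expressions: if all elements `x` of a rational `S` have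
the same length difference `|x₁| - |x₂|`, then for all pairs `L`, `R` the words `w` over `A × A`
with `L · w = x · R` for some `x ∈ S` form a rational set; `L = R = 1` gives the theorem. For a
product `S · T` such a word can be cut after its `S`-factor, and the buffer left over at the cut
is bounded by `L` and the length difference of `S`: this gives a finite union of products. For a
star the length difference is `0`, so buffers never grow, and the words are the path labels of a
finite graph whose vertices are the small buffers and whose edges are labelled by sets rational
by induction; these labels form a rational set by McNaughton–Yamada state elimination.
-/

open scoped Pointwise

/-- The canonical embedding `(A × A)* → A* × A*`. -/
noncomputable def diagEmbedding (A : Type) :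
    FreeMonoid (A × A) →* FreeMonoid A × FreeMonoid A :=
  FreeMonoid.lift fun p => (FreeMonoid.of p.1, FreeMonoid.of p.2)

namespace IsRational

variable {M : Type} [Monoid M]

theorem empty : IsRational (∅ : Set M) :=
  .finite _ Set.finite_empty

theorem iUnion {ι : Type} [Finite ι] {s : ι → Set M} (hs : ∀ i, IsRational (s i)) :
    IsRational (⋃ i, s i) := by
  classical
  have := Fintype.ofFinite ι
  rw [show ⋃ i, s i = ⋃ i ∈ Finset.univ, s i by simp]
  induction (Finset.univ : Finset ι) using Finset.induction_on with
  | empty => simpa using empty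
  | insert i t _ ih => rw [Finset.set_biUnion_insert]; exact .union _ _ (hs i) ih

end IsRational

section PathLabels

variable {M Q : Type} [Monoid M] (f : Q → Q → Set M)

inductive IsPathLabel : Q → Q → M → Prop
  | nil (i : Q) : IsPathLabel i i 1
  | cons {i j k : Q} {a b : M} : a ∈ f i j → IsPathLabel j k b → IsPathLabel i k (a * b)

variable {f}

theorem IsPathLabel.of_mem {i j : Q} {a : M} (ha : a ∈ f i j) : IsPathLabel f i j a := by
  simpa using IsPathLabel.cons ha (.nil j)

theorem IsPathLabel.mul {i j k : Q} {a b : M} (ha : IsPathLabel f i j a)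
    (hb : IsPathLabel f j k b) : IsPathLabel f i k (a * b) := by
  induction ha with
  | nil => simpa using hb
  | cons hedge _ ih => simpa [mul_assoc] using IsPathLabel.cons hedge (ih hb)

variable (f)

/-- McNaughton–Yamada state elimination: the labels of the paths from `i` to `j` all of whose
intermediate vertices lie in `l`. -/
def pathLabelsThrough : List Q → Q → Q → Set M
  | [], i, j => f i j ∪ {m | i = j ∧ m = 1}
  | q :: l, i, j => pathLabelsThrough l i j ∪
      pathLabelsThrough l i q * (Submonoid.closure (pathLabelsThrough l q q) : Set M) *
        pathLabelsThrough l q j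

variable {f}

theorem isRational_pathLabelsThrough (hf : ∀ i j, IsRational (f i j)) :
    ∀ (l : List Q) (i j : Q), IsRational (pathLabelsThrough f l i j)
  | [], i, j => by
    refine .union _ _ (hf i j) (.finite _ ((Set.finite_singleton (1 : M)).subset ?_))
    rintro m ⟨-, rfl⟩
    rfl
  | q :: l, i, j =>
    have ih := isRational_pathLabelsThrough hf l
    .union _ _ (ih i j) (.mul _ _ (.mul _ _ (ih i q) (.star _ (ih q q))) (ih q j))

theorem pathLabelsThrough_nil_subset {i j : Q} :
    ∀ l : List Q, pathLabelsThrough f [] i j ⊆ pathLabelsThrough f l i j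
  | [] => subset_rfl
  | _ :: l => (pathLabelsThrough_nil_subset l).trans Set.subset_union_left

theorem pathLabelsThrough_subset :
    ∀ (l : List Q) (i j : Q), pathLabelsThrough f l i j ⊆ {m | IsPathLabel f i j m}
  | [], i, j => by
    rintro m (hm | ⟨rfl, rfl⟩)
    · exact .of_mem hm
    · exact .nil i
  | q :: l, i, j => by
    have ih := pathLabelsThrough_subset l
    let loops : Submonoid M :=
      { carrier := {m | IsPathLabel f q q m}
        mul_mem' := IsPathLabel.mul
        one_mem' := .nil q }
    refine Set.union_subset (ih i j) ?_
    rintro _ ⟨_, ⟨a, ha, b, hb, rfl⟩, c, hc, rfl⟩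
    have hb' : IsPathLabel f q q b := Submonoid.closure_le (S := loops) |>.mpr (ih q q) hb
    exact ((ih i q ha).mul hb').mul (ih q j hc)

theorem mul_mem_pathLabelsThrough {i j k : Q} {a b : M} :
    ∀ {l : List Q}, j ∈ l → a ∈ f i j → b ∈ pathLabelsThrough f l j k →
      a * b ∈ pathLabelsThrough f l i k
  | q :: l, hj, ha, hb => by
    have ha' : a ∈ pathLabelsThrough f l i j := pathLabelsThrough_nil_subset l (.inl ha)
    rcases List.mem_cons.mp hj with rfl | hj
    · right
      rcases hb with hb | ⟨_, ⟨b₁, hb₁, c, hc, rfl⟩, b₂, hb₂, rfl⟩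
      · simpa using Set.mul_mem_mul (Set.mul_mem_mul ha' (Submonoid.one_mem _)) hb
      · have hb₁c := Submonoid.mul_mem _ (Submonoid.subset_closure hb₁) hc
        simpa [mul_assoc] using Set.mul_mem_mul (Set.mul_mem_mul ha' hb₁c) hb₂
    · rcases hb with hb | ⟨_, ⟨b₁, hb₁, c, hc, rfl⟩, b₂, hb₂, rfl⟩
      · exact .inl (mul_mem_pathLabelsThrough hj ha hb)
      · right
        have hab₁ := mul_mem_pathLabelsThrough hj ha hb₁
        simpa [mul_assoc] using Set.mul_mem_mul (Set.mul_mem_mul hab₁ hc) hb₂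

theorem setOf_isPathLabel_eq {l : List Q} (hl : ∀ q, q ∈ l) (i j : Q) :
    {m | IsPathLabel f i j m} = pathLabelsThrough f l i j := by
  refine subset_antisymm (fun m hm => ?_) (pathLabelsThrough_subset l i j)
  induction hm with
  | nil i => exact pathLabelsThrough_nil_subset l (.inr ⟨rfl, rfl⟩)
  | cons ha _ ih => exact mul_mem_pathLabelsThrough (hl _) ha ih

theorem isRational_setOf_isPathLabel [Finite Q] (hf : ∀ i j, IsRational (f i j)) (i j : Q) :
    IsRational {m | IsPathLabel f i j m} := by
  obtain ⟨l, -, hl⟩ := Finite.exists_univ_list Q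
  rw [setOf_isPathLabel_eq hl]
  exact isRational_pathLabelsThrough hf l i j

end PathLabels

namespace FreeMonoid

variable {α : Type}

theorem finite_setOf_length_le [Finite α] (n : ℕ) :
    {w : FreeMonoid α | w.length ≤ n}.Finite :=
  (List.finite_length_le α n).preimage toList.injective.injOn

theorem exists_eq_mul_of_mul_eq {a b x z : FreeMonoid α} (h : a * b = x * z)
    (hx : x.length ≤ a.length) : ∃ p, a = x * p ∧ z = p * b := by
  have hxa : x.toList <+: a.toList :=
    List.prefix_of_prefix_length_le ⟨z.toList, by simpa using congrArg toList h.symm⟩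
      (List.prefix_append _ _) hx
  obtain ⟨p, hp⟩ := hxa
  refine ⟨ofList p, toList.injective (by simpa using hp.symm), ?_⟩
  apply toList.injective
  have := congrArg toList h
  rw [toList_mul, toList_mul, ← hp, List.append_assoc] at this
  simpa using (List.append_cancel_left this).symm

theorem exists_eq_mul_length_eq {w : FreeMonoid α} {m : ℕ} (hm : m ≤ w.length) :
    ∃ w₁ w₂, w = w₁ * w₂ ∧ w₁.length = m :=
  ⟨ofList (w.toList.take m), ofList (w.toList.drop m), toList.injective (by simp),
    by simpa [length] using hm⟩

end FreeMonoid

section PaddedPreimage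

variable {A : Type}

@[simp]
theorem diagEmbedding_fst_length (w : FreeMonoid (A × A)) :
    (diagEmbedding A w).1.length = w.length := by
  induction w using FreeMonoid.inductionOn' with
  | one => simp
  | of_mul a w ih => simp [diagEmbedding, ih] at *

@[simp]
theorem diagEmbedding_snd_length (w : FreeMonoid (A × A)) :
    (diagEmbedding A w).2.length = w.length := by
  induction w using FreeMonoid.inductionOn' with
  | one => simp
  | of_mul a w ih => simp [diagEmbedding, ih] at *

def lengthDiff (x : FreeMonoid A × FreeMonoid A) : ℤ :=
  x.1.length - x.2.length

@[simp]
theorem lengthDiff_one : lengthDiff (1 : FreeMonoid A × FreeMonoid A) = 0 := by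
  simp [lengthDiff]

theorem lengthDiff_mul (x y : FreeMonoid A × FreeMonoid A) :
    lengthDiff (x * y) = lengthDiff x + lengthDiff y := by
  simp only [lengthDiff, Prod.fst_mul, Prod.snd_mul, FreeMonoid.length_mul]
  push_cast
  ring

def boundedPairs (n : ℕ) : Set (FreeMonoid A × FreeMonoid A) :=
  {P | P.1.length ≤ n ∧ P.2.length ≤ n}

theorem mem_boundedPairs_max (L : FreeMonoid A × FreeMonoid A) :
    L ∈ boundedPairs (max L.1.length L.2.length) :=
  ⟨le_max_left _ _, le_max_right _ _⟩

instance [Finite A] (n : ℕ) : Finite (boundedPairs (A := A) n) :=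
  ((FreeMonoid.finite_setOf_length_le n).prod (FreeMonoid.finite_setOf_length_le n)).to_subtype

/-- `L` and `R` are buffers absorbing the lag between the two tapes. -/
def paddedPreimage (L R : FreeMonoid A × FreeMonoid A) (S : Set (FreeMonoid A × FreeMonoid A)) :
    Set (FreeMonoid (A × A)) :=
  {w | ∃ x ∈ S, L * diagEmbedding A w = x * R}

def bufferGraph (S : Set (FreeMonoid A × FreeMonoid A)) (n : ℕ)
    (p q : boundedPairs (A := A) n) : Set (FreeMonoid (A × A)) :=
  paddedPreimage p.val q.val S

variable {L P R : FreeMonoid A × FreeMonoid A} {S T : Set (FreeMonoid A × FreeMonoid A)}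

theorem paddedPreimage_one_one (S : Set (FreeMonoid A × FreeMonoid A)) :
    paddedPreimage 1 1 S = diagEmbedding A ⁻¹' S := by
  ext w
  simp [paddedPreimage]

theorem paddedPreimage_mono (h : S ⊆ T) : paddedPreimage L R S ⊆ paddedPreimage L R T :=
  fun _ ⟨x, hx, hw⟩ => ⟨x, h hx, hw⟩

theorem paddedPreimage_union :
    paddedPreimage L R (S ∪ T) = paddedPreimage L R S ∪ paddedPreimage L R T := by
  ext w
  simp only [paddedPreimage, Set.mem_ofPred_eq, Set.mem_union, or_and_right, exists_or]

theorem paddedPreimage_mul_subset :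
    paddedPreimage L P S * paddedPreimage P R T ⊆ paddedPreimage L R (S * T) := by
  rintro _ ⟨w₁, ⟨x, hx, hw₁⟩, w₂, ⟨y, hy, hw₂⟩, rfl⟩
  refine ⟨x * y, Set.mul_mem_mul hx hy, ?_⟩
  rw [map_mul, ← mul_assoc, hw₁, mul_assoc, hw₂, mul_assoc]

theorem finite_paddedPreimage [Finite A] (hS : S.Finite) (L R : FreeMonoid A × FreeMonoid A) :
    (paddedPreimage L R S).Finite := by
  refine (hS.biUnion fun x _ =>
    FreeMonoid.finite_setOf_length_le (α := A × A) (x.1.length + R.1.length)).subset ?_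
  rintro w ⟨x, hx, hw⟩
  have hlen := congrArg (fun z => z.1.length) hw
  simp only [Prod.fst_mul, FreeMonoid.length_mul, diagEmbedding_fst_length] at hlen
  exact Set.mem_biUnion hx (by simp only [Set.mem_ofPred_eq]; omega)

theorem exists_split_of_mul_diagEmbedding_eq {x y : FreeMonoid A × FreeMonoid A}
    {w : FreeMonoid (A × A)} {n : ℕ} (hL : L ∈ boundedPairs n)
    (h : L * diagEmbedding A w = x * y * R) :
    ∃ P ∈ boundedPairs (n + (lengthDiff x).natAbs), ∃ w₁ w₂, w = w₁ * w₂ ∧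
      L * diagEmbedding A w₁ = x * P ∧ P * diagEmbedding A w₂ = y * R := by
  have hlen₁ := congrArg (fun z => z.1.length) h
  have hlen₂ := congrArg (fun z => z.2.length) h
  simp only [Prod.fst_mul, Prod.snd_mul, FreeMonoid.length_mul, diagEmbedding_fst_length,
    diagEmbedding_snd_length] at hlen₁ hlen₂
  -- cut at the first position where `x` has been read on both tapes
  set m := max (x.1.length - L.1.length) (x.2.length - L.2.length)
  obtain ⟨w₁, w₂, rfl, hw₁⟩ := FreeMonoid.exists_eq_mul_length_eq (w := w) (m := m)
    (by omega)
  rw [map_mul, ← mul_assoc, mul_assoc x] at h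
  obtain ⟨p₁, hp₁, hq₁⟩ := FreeMonoid.exists_eq_mul_of_mul_eq (congrArg Prod.fst h)
    (by simp only [Prod.fst_mul, FreeMonoid.length_mul, diagEmbedding_fst_length]; omega)
  obtain ⟨p₂, hp₂, hq₂⟩ := FreeMonoid.exists_eq_mul_of_mul_eq (congrArg Prod.snd h)
    (by simp only [Prod.snd_mul, FreeMonoid.length_mul, diagEmbedding_snd_length]; omega)
  refine ⟨(p₁, p₂), ?_, w₁, w₂, rfl, Prod.ext hp₁ hp₂, (Prod.ext hq₁ hq₂).symm⟩
  have hl₁ := congrArg FreeMonoid.length hp₁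
  have hl₂ := congrArg FreeMonoid.length hp₂
  simp only [Prod.fst_mul, Prod.snd_mul, FreeMonoid.length_mul, diagEmbedding_fst_length,
    diagEmbedding_snd_length] at hl₁ hl₂
  obtain ⟨hL₁, hL₂⟩ := hL
  constructor <;> simp only [lengthDiff] <;> omega

theorem paddedPreimage_mul {n : ℕ} {d : ℤ} (hL : L ∈ boundedPairs n)
    (hS : ∀ x ∈ S, lengthDiff x = d) :
    paddedPreimage L R (S * T) =
      ⋃ P : boundedPairs (n + d.natAbs), paddedPreimage L P.val S * paddedPreimage P.val R T := by
  refine subset_antisymm ?_ (Set.iUnion_subset fun _ => paddedPreimage_mul_subset)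
  rintro w ⟨_, ⟨x, hx, y, hy, rfl⟩, hw⟩
  obtain ⟨P, hP, w₁, w₂, rfl, hw₁, hw₂⟩ := exists_split_of_mul_diagEmbedding_eq hL hw
  rw [hS x hx] at hP
  exact Set.mem_iUnion.mpr ⟨⟨P, hP⟩, Set.mul_mem_mul ⟨x, hx, hw₁⟩ ⟨y, hy, hw₂⟩⟩

theorem mem_paddedPreimage_closure_of_isPathLabel {n : ℕ} {p q : boundedPairs n}
    {w : FreeMonoid (A × A)} (hw : IsPathLabel (bufferGraph S n) p q w) :
    w ∈ paddedPreimage p.val q.val (Submonoid.closure S) := by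
  induction hw with
  | nil p => exact ⟨1, Submonoid.one_mem _, by simp⟩
  | cons ha _ ih =>
    refine paddedPreimage_mono ?_ (paddedPreimage_mul_subset (Set.mul_mem_mul ha ih))
    rintro _ ⟨a, ha, b, hb, rfl⟩
    exact Submonoid.mul_mem _ (Submonoid.subset_closure ha) hb

/-- Factors of length difference `0` never enlarge the buffer, so the buffers bounded by `n`
suffice as vertices. -/
theorem paddedPreimage_closure {n : ℕ} (hL : L ∈ boundedPairs n)
    (hS : ∀ x ∈ S, lengthDiff x = 0) :
    paddedPreimage L R (Submonoid.closure S) =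
      ⋃ P : boundedPairs n,
        {w | IsPathLabel (bufferGraph S n) ⟨L, hL⟩ P w} * paddedPreimage P.val R {1} := by
  apply subset_antisymm
  · rintro w ⟨x, hx, hw⟩
    induction hx using Submonoid.closure_induction_left generalizing L w with
    | one =>
      exact Set.mem_iUnion.mpr ⟨⟨L, hL⟩, 1, .nil _, w, ⟨1, rfl, by simpa using hw⟩, one_mul w⟩
    | mul_left x hx y _ ih =>
      obtain ⟨P, hP, w₁, w₂, rfl, hw₁, hw₂⟩ := exists_split_of_mul_diagEmbedding_eq hL hw
      rw [hS x hx, Int.natAbs_zero, add_zero] at hP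
      obtain ⟨Q, _, hpath, w₃, hw₃, hw₂₃⟩ := Set.mem_iUnion.mp (ih hP hw₂)
      refine Set.mem_iUnion.mpr ⟨Q, w₁ * _, .cons ⟨x, hx, hw₁⟩ hpath, w₃, hw₃, ?_⟩
      rw [← hw₂₃]
      exact mul_assoc _ _ _
  · refine Set.iUnion_subset fun P => ?_
    rintro _ ⟨w₁, hw₁, w₂, hw₂, rfl⟩
    refine paddedPreimage_mono ?_ (paddedPreimage_mul_subset
      (Set.mul_mem_mul (mem_paddedPreimage_closure_of_isPathLabel hw₁) hw₂))
    rintro _ ⟨a, ha, _, rfl, rfl⟩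
    simpa using ha

theorem isRational_paddedPreimage [Finite A] (hS : IsRational S) {d : ℤ}
    (hd : ∀ x ∈ S, lengthDiff x = d) (L R : FreeMonoid A × FreeMonoid A) :
    IsRational (paddedPreimage L R S) := by
  induction hS generalizing d L R with
  | finite S hS => exact .finite _ (finite_paddedPreimage hS L R)
  | union S T _ _ ihS ihT =>
    rw [paddedPreimage_union]
    exact .union _ _ (ihS (fun x hx => hd x (.inl hx)) L R)
      (ihT (fun x hx => hd x (.inr hx)) L R)
  | mul S T _ _ ihS ihT =>
    rcases S.eq_empty_or_nonempty with rfl | ⟨x₀, hx₀⟩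
    · simpa [paddedPreimage] using IsRational.empty
    rcases T.eq_empty_or_nonempty with rfl | ⟨y₀, hy₀⟩
    · simpa [paddedPreimage] using IsRational.empty
    have hS : ∀ x ∈ S, lengthDiff x = d - lengthDiff y₀ := fun x hx => by
      rw [← hd _ (Set.mul_mem_mul hx hy₀), lengthDiff_mul, add_sub_cancel_right]
    have hT : ∀ y ∈ T, lengthDiff y = d - lengthDiff x₀ := fun y hy => by
      rw [← hd _ (Set.mul_mem_mul hx₀ hy), lengthDiff_mul, add_sub_cancel_left]
    rw [paddedPreimage_mul (mem_boundedPairs_max L) hS]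
    exact .iUnion fun P => .mul _ _ (ihS hS L P) (ihT hT P R)
  | star S _ ih =>
    have hS : ∀ x ∈ S, lengthDiff x = 0 := fun x hx => by
      rw [hd x (Submonoid.subset_closure hx), ← hd 1 (Submonoid.one_mem _), lengthDiff_one]
    rw [paddedPreimage_closure (mem_boundedPairs_max L) hS]
    exact .iUnion fun P => .mul _ _
      (isRational_setOf_isPathLabel (fun p q : boundedPairs _ => ih hS p.val q.val) _ _)
      (.finite _ (finite_paddedPreimage (Set.finite_singleton 1) P R))

end PaddedPreimage

/-- Eilenberg: a length-preserving rational relation on `A* × A*` is rational as a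
subset of `(A × A)*` (via the canonical identification). -/
theorem isRational_of_length_preserving {A : Type} [Finite A]
    (T : Set (FreeMonoid A × FreeMonoid A))
    (hlen : ∀ p ∈ T, (p.1 : FreeMonoid A).length = p.2.length)
    (hT : IsRational T) :
    IsRational (diagEmbedding A ⁻¹' T : Set (FreeMonoid (A × A))) := by
  rw [← paddedPreimage_one_one]
  exact isRational_paddedPreimage hT (d := 0) (fun x hx => by simp [lengthDiff, hlen x hx]) 1 1
end

section
/- Every subgroup of a finitely generated free group F(A) that is a rational subset of F(A) is finitely generated. Consequently, every group admitting a presentation ⟨A ; R⟩ with A finite and R generating a normal subgroup that is a rational subset of F(A) is finitely presented. -/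
open scoped Pointwise

/-!
Regularity of languages, in the Myhill–Nerode form "finitely many left quotients", is preserved by
union, concatenation and Kleene star, so a rational subset of a monoid is the image under
`List.prod` of a regular language `L` over finitely many letters.

Suppose this image is a subgroup `H` of a group. Choose for every left quotient of `L` a word `u`
having it as left quotient. Two words with a common continuation into `L` differ by an element of
`H`, so the finitely many Schreier elements `u a u'⁻¹` (where `u'` represents the quotient of `u a`)
and `u` (for quotients containing `[]`) lie in `H`; telescoping along a word of `L` writes its
product in terms of them.
-/

open Computability

namespace Language

variable {α : Type*} {l m : Language α}

theorem mem_leftQuotient_mul {x y : List α} :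
    y ∈ (l * m).leftQuotient x ↔
      y ∈ l.leftQuotient x * m ∨ ∃ v, (∃ u ∈ l, u ++ v = x) ∧ y ∈ m.leftQuotient v := by
  simp only [mem_leftQuotient, mem_mul]
  constructor
  · rintro ⟨a, ha, b, hb, hab⟩
    obtain ⟨c, rfl, rfl⟩ | ⟨c, rfl, rfl⟩ := List.append_eq_append_iff.mp hab
    · exact .inr ⟨c, ⟨a, ha, rfl⟩, hb⟩
    · exact .inl ⟨c, ha, b, hb, rfl⟩
  · rintro (⟨c, hc, b, hb, rfl⟩ | ⟨v, ⟨u, hu, rfl⟩, hv⟩)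
    · exact ⟨x ++ c, hc, b, hb, List.append_assoc ..⟩
    · exact ⟨u, hu, v ++ y, hv, (List.append_assoc ..).symm⟩

theorem IsRegular.mul (hl : l.IsRegular) (hm : m.IsRegular) : (l * m).IsRegular := by
  rw [isRegular_iff_finite_range_leftQuotient] at *
  refine ((hl.prod hm.powerset).image fun p : Language α × Set (Language α) =>
    ({y | y ∈ p.1 * m ∨ ∃ Q ∈ p.2, y ∈ Q} : Language α)).subset ?_
  rintro _ ⟨x, rfl⟩
  refine ⟨(l.leftQuotient x, m.leftQuotient '' {v | ∃ u ∈ l, u ++ v = x}),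
    ⟨⟨x, rfl⟩, Set.image_subset_range _ _⟩, Language.ext fun y => ?_⟩
  rw [mem_leftQuotient_mul]
  change _ ∨ _ ↔ _
  simp only [Set.mem_image, exists_exists_and_eq_and]
  rfl

theorem mem_leftQuotient_kstar {x y : List α} (hx : x ≠ []) :
    y ∈ l∗.leftQuotient x ↔ ∃ v, (∃ u ∈ l∗, u ++ v = x) ∧ y ∈ l.leftQuotient v * l∗ := by
  constructor
  · rw [mem_leftQuotient, mem_kstar]
    rintro ⟨W, hW, hWl⟩
    induction W generalizing x with
    | nil => exact absurd (List.append_eq_nil_iff.mp hW).1 hx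
    | cons w W ih =>
      have hw : w ∈ l := hWl w List.mem_cons_self
      have hWl' : ∀ z ∈ W, z ∈ l := fun z hz => hWl z (List.mem_cons_of_mem w hz)
      rw [List.flatten_cons] at hW
      obtain ⟨a, rfl, rfl⟩ | ⟨_ | ⟨b, c⟩, rfl, hc⟩ := List.append_eq_append_iff.mp hW
      · exact ⟨x, ⟨[], nil_mem_kstar l, rfl⟩, mem_mul.mpr ⟨a, hw, _, join_mem_kstar hWl', rfl⟩⟩
      · refine ⟨w ++ [], ⟨[], nil_mem_kstar l, rfl⟩, mem_mul.mpr ⟨[], by simpa, y, ?_, rfl⟩⟩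
        simpa [hc] using join_mem_kstar hWl'
      · obtain ⟨v, ⟨u, hu, huv⟩, hy⟩ := ih (List.cons_ne_nil b c) hc.symm hWl'
        refine ⟨v, ⟨w ++ u, mul_kstar_le_kstar (a := l) (mem_mul.mpr ⟨w, hw, u, hu, rfl⟩), ?_⟩, hy⟩
        rw [List.append_assoc, huv]
  · rintro ⟨v, ⟨u, hu, rfl⟩, hv⟩
    rw [mem_leftQuotient, List.append_assoc]
    refine kstar_mul_kstar l ▸ mem_mul.mpr ⟨u, hu, v ++ y, mul_kstar_le_kstar (a := l) ?_, rfl⟩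
    obtain ⟨a, ha, b, hb, rfl⟩ := mem_mul.mp hv
    exact mem_mul.mpr ⟨v ++ a, ha, b, hb, List.append_assoc ..⟩

theorem IsRegular.kstar (hl : l.IsRegular) : l∗.IsRegular := by
  rw [isRegular_iff_finite_range_leftQuotient] at *
  refine (((hl.powerset).image fun T : Set (Language α) =>
    ({y | ∃ Q ∈ T, y ∈ Q * l∗} : Language α)).insert l∗).subset ?_
  rintro _ ⟨x, rfl⟩
  rcases eq_or_ne x [] with rfl | hx
  · exact .inl rfl
  refine .inr ⟨l.leftQuotient '' {v | ∃ u ∈ l∗, u ++ v = x}, Set.image_subset_range _ _,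
    Language.ext fun y => ?_⟩
  rw [mem_leftQuotient_kstar hx]
  change (∃ _, _) ↔ _
  simp only [Set.mem_image, exists_exists_and_eq_and]
  rfl

theorem isRegular_of_finite (hl : (l : Set (List α)).Finite) : l.IsRegular := by
  rw [isRegular_iff_finite_range_leftQuotient]
  have hprefixes : {x | ∃ w ∈ l, x <+: w}.Finite := by
    refine (hl.biUnion fun w _ => w.inits.finite_toSet).subset ?_
    rintro x ⟨w, hw, hxw⟩
    exact Set.mem_biUnion hw ((List.mem_inits x w).mpr hxw)
  refine ((hprefixes.image l.leftQuotient).insert 0).subset ?_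
  rintro _ ⟨x, rfl⟩
  by_cases h : ∃ y, x ++ y ∈ l
  · obtain ⟨y, hy⟩ := h
    exact .inr ⟨x, ⟨x ++ y, hy, List.prefix_append x y⟩, rfl⟩
  · simp only [not_exists] at h
    exact .inl (Language.ext fun y => iff_of_false (h y) (notMem_zero y))

def letters (l : Language α) : Set α := {a | ∃ w ∈ l, a ∈ w}

theorem letters_add : (l + m).letters = l.letters ∪ m.letters := by
  ext a
  simp only [letters, Set.mem_union, Set.mem_ofPred_eq, mem_add, or_and_right, exists_or]

theorem letters_mul_subset : (l * m).letters ⊆ l.letters ∪ m.letters := by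
  rintro a ⟨_, hw, ha⟩
  obtain ⟨u, hu, v, hv, rfl⟩ := mem_mul.mp hw
  rcases List.mem_append.mp ha with ha | ha
  exacts [.inl ⟨u, hu, ha⟩, .inr ⟨v, hv, ha⟩]

theorem letters_kstar_subset : l∗.letters ⊆ l.letters := by
  rintro a ⟨_, hw, ha⟩
  obtain ⟨W, rfl, hW⟩ := mem_kstar.mp hw
  obtain ⟨w, hwW, haw⟩ := List.mem_flatten.mp ha
  exact ⟨w, hW w hwW, haw⟩

theorem finite_letters_of_finite (hl : (l : Set (List α)).Finite) : l.letters.Finite :=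
  (hl.biUnion fun w _ => w.finite_toSet).subset fun _ ⟨_, hw, ha⟩ => Set.mem_biUnion hw ha

theorem image_prod_mul {M : Type*} [Monoid M] (l m : Language M) :
    List.prod '' ((l * m : Language M) : Set (List M)) =
      List.prod '' (l : Set (List M)) * List.prod '' (m : Set (List M)) := by
  ext g
  constructor
  · rintro ⟨_, hw, rfl⟩
    obtain ⟨u, hu, v, hv, rfl⟩ := mem_mul.mp hw
    exact ⟨u.prod, ⟨u, hu, rfl⟩, v.prod, ⟨v, hv, rfl⟩, List.prod_append.symm⟩
  · rintro ⟨_, ⟨u, hu, rfl⟩, _, ⟨v, hv, rfl⟩, rfl⟩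
    exact ⟨u ++ v, mem_mul.mpr ⟨u, hu, v, hv, rfl⟩, List.prod_append⟩

theorem image_prod_kstar {M : Type*} [Monoid M] (l : Language M) :
    List.prod '' ((l∗ : Language M) : Set (List M)) =
      Submonoid.closure (List.prod '' (l : Set (List M))) := by
  ext g
  constructor
  · rintro ⟨_, hw, rfl⟩
    obtain ⟨W, rfl, hW⟩ := mem_kstar.mp hw
    rw [List.prod_flatten]
    refine Submonoid.list_prod_mem _ fun _ hx => ?_
    obtain ⟨w, hw, rfl⟩ := List.mem_map.mp hx
    exact Submonoid.subset_closure ⟨w, hW w hw, rfl⟩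
  · intro hg
    induction hg using Submonoid.closure_induction with
    | mem _ h =>
      obtain ⟨w, hw, rfl⟩ := h
      exact ⟨w, le_kstar (a := l) hw, rfl⟩
    | one => exact ⟨[], nil_mem_kstar l, rfl⟩
    | mul _ _ _ _ hx hy =>
      obtain ⟨u, hu, rfl⟩ := hx
      obtain ⟨v, hv, rfl⟩ := hy
      exact ⟨u ++ v, kstar_mul_kstar l ▸ mem_mul.mpr ⟨u, hu, v, hv, rfl⟩, List.prod_append⟩

-- `[]` represents `l` itself, so that the telescoping product along a word starts at `1`.
open Classical in
variable (l) in
noncomputable def quotientRep (x : List α) : List α :=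
  if l.leftQuotient x = l then [] else Function.invFun l.leftQuotient (l.leftQuotient x)

@[simp]
theorem quotientRep_nil : l.quotientRep [] = [] := if_pos rfl

@[simp]
theorem leftQuotient_quotientRep (x : List α) :
    l.leftQuotient (l.quotientRep x) = l.leftQuotient x := by
  unfold quotientRep
  split_ifs with h
  · exact h.symm
  · exact Function.invFun_eq ⟨x, rfl⟩

theorem quotientRep_congr {x x' : List α} (h : l.leftQuotient x = l.leftQuotient x') :
    l.quotientRep x = l.quotientRep x' := by
  unfold quotientRep
  rw [h]

theorem quotientRep_quotientRep_append (x y : List α) :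
    l.quotientRep (l.quotientRep x ++ y) = l.quotientRep (x ++ y) :=
  quotientRep_congr (by rw [leftQuotient_append, leftQuotient_append, leftQuotient_quotientRep])

theorem IsRegular.finite_range_quotientRep (hl : l.IsRegular) :
    (Set.range l.quotientRep).Finite := by
  classical
  refine (hl.finite_range_leftQuotient.image fun Q =>
    if Q = l then [] else Function.invFun l.leftQuotient Q).subset ?_
  rintro _ ⟨x, rfl⟩
  exact ⟨_, ⟨x, rfl⟩, rfl⟩

section Group

variable {G : Type*} [Group G] {L : Language G} {H : Subgroup G}

theorem prod_mem_of_mem (hH : List.prod '' (L : Set (List G)) = H) {w : List G} (hw : w ∈ L) :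
    w.prod ∈ H := by
  rw [← SetLike.mem_coe, ← hH]
  exact Set.mem_image_of_mem _ hw

theorem prod_mul_inv_mem_of_append_mem (hH : List.prod '' (L : Set (List G)) = H)
    {x x' y : List G} (h : x ++ y ∈ L) (h' : x' ++ y ∈ L) : x.prod * x'.prod⁻¹ ∈ H := by
  simpa [List.prod_append, mul_assoc] using
    H.mul_mem (prod_mem_of_mem hH h) (H.inv_mem (prod_mem_of_mem hH h'))

variable (L) in
noncomputable def schreierGenerators : Set G :=
  {g | ∃ x a, (∃ y, x ++ [a] ++ y ∈ L) ∧
      (L.quotientRep x).prod * a * (L.quotientRep (x ++ [a])).prod⁻¹ = g} ∪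
    (fun w => (L.quotientRep w).prod) '' L

theorem schreierGenerators_finite (hL : L.IsRegular) (hA : L.letters.Finite) :
    L.schreierGenerators.Finite := by
  have hR := hL.finite_range_quotientRep
  refine ((hR.image2 (fun r a => r.prod * a * (L.quotientRep (r ++ [a])).prod⁻¹) hA).union
    (hR.image List.prod)).subset ?_
  rintro _ (⟨x, a, ⟨y, hy⟩, rfl⟩ | ⟨w, -, rfl⟩)
  · refine .inl ⟨L.quotientRep x, ⟨x, rfl⟩, a, ⟨_, hy, by simp⟩, ?_⟩
    simp only [quotientRep_quotientRep_append]
  · exact .inr ⟨_, ⟨w, rfl⟩, rfl⟩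

theorem schreierGenerators_subset (hH : List.prod '' (L : Set (List G)) = H) :
    L.schreierGenerators ⊆ H := by
  rintro _ (⟨x, a, ⟨y, hy⟩, rfl⟩ | ⟨w, hw, rfl⟩)
  · have h : L.quotientRep x ++ [a] ++ y ∈ L := by
      rwa [← mem_leftQuotient, leftQuotient_append, leftQuotient_quotientRep,
        ← leftQuotient_append]
    have h' : L.quotientRep (x ++ [a]) ++ y ∈ L := by
      rwa [← mem_leftQuotient, leftQuotient_quotientRep]
    simpa [List.prod_append] using prod_mul_inv_mem_of_append_mem hH h h'
  · have h : L.quotientRep w ++ [] ∈ L := by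
      rwa [← mem_leftQuotient, leftQuotient_quotientRep, mem_leftQuotient, List.append_nil]
    simpa using prod_mem_of_mem hH h

theorem prod_mul_inv_quotientRep_mem_closure {x : List G} (hx : ∃ y, x ++ y ∈ L) :
    x.prod * (L.quotientRep x).prod⁻¹ ∈ Subgroup.closure L.schreierGenerators := by
  induction x using List.reverseRecOn with
  | nil => simp
  | append_singleton x a ih =>
    have hx' : ∃ y, x ++ y ∈ L := by
      obtain ⟨y, hy⟩ := hx
      exact ⟨[a] ++ y, by rwa [← List.append_assoc]⟩
    have hgen : (L.quotientRep x).prod * a * (L.quotientRep (x ++ [a])).prod⁻¹ ∈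
        L.schreierGenerators := .inl ⟨x, a, hx, rfl⟩
    have := mul_mem (ih hx') (Subgroup.subset_closure hgen)
    simpa [List.prod_append, mul_assoc] using this

theorem prod_mem_closure_schreierGenerators {w : List G} (hw : w ∈ L) :
    w.prod ∈ Subgroup.closure L.schreierGenerators := by
  have h := prod_mul_inv_quotientRep_mem_closure (L := L) (x := w) ⟨[], by simpa⟩
  have hrep : (L.quotientRep w).prod ∈ L.schreierGenerators := .inr ⟨w, hw, rfl⟩
  simpa using mul_mem h (Subgroup.subset_closure hrep)

end Group

end Language

theorem Subgroup.fg_of_isRegular {G : Type*} [Group G] {H : Subgroup G} {L : Language G}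
    (hL : L.IsRegular) (hA : L.letters.Finite) (hH : List.prod '' (L : Set (List G)) = H) :
    H.FG := by
  refine (Subgroup.fg_iff H).mpr ⟨_, le_antisymm ?_ ?_, Language.schreierGenerators_finite hL hA⟩
  · exact (Subgroup.closure_le H).mpr (Language.schreierGenerators_subset hH)
  · intro g hg
    rw [← SetLike.mem_coe, ← hH] at hg
    obtain ⟨w, hw, rfl⟩ := hg
    exact Language.prod_mem_closure_schreierGenerators hw

theorem IsRational.exists_isRegular {M : Type} [Monoid M] {S : Set M} (h : IsRational S) :
    ∃ L : Language M, L.IsRegular ∧ L.letters.Finite ∧ List.prod '' (L : Set (List M)) = S := by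
  induction h with
  | finite s hs =>
    have hfin : ((fun a => [a]) '' s).Finite := hs.image _
    refine ⟨(fun a => [a]) '' s, Language.isRegular_of_finite hfin,
      Language.finite_letters_of_finite hfin, ?_⟩
    simp [Set.image_image]
  | union s t _ _ ihs iht =>
    obtain ⟨L, hL, hA, rfl⟩ := ihs
    obtain ⟨L', hL', hA', rfl⟩ := iht
    exact ⟨L + L', hL.add hL', Language.letters_add ▸ hA.union hA', Set.image_union _ _ _⟩
  | mul s t _ _ ihs iht =>
    obtain ⟨L, hL, hA, rfl⟩ := ihs
    obtain ⟨L', hL', hA', rfl⟩ := iht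
    exact ⟨L * L', hL.mul hL', (hA.union hA').subset Language.letters_mul_subset,
      Language.image_prod_mul L L'⟩
  | star s _ ih =>
    obtain ⟨L, hL, hA, rfl⟩ := ih
    exact ⟨L∗, hL.kstar, hA.subset Language.letters_kstar_subset, Language.image_prod_kstar L⟩

theorem Subgroup.fg_of_isRational {G : Type} [Group G] {H : Subgroup G}
    (h : IsRational (H : Set G)) : H.FG :=
  let ⟨_, hL, hA, hH⟩ := h.exists_isRegular
  Subgroup.fg_of_isRegular hL hA hH

theorem rational_subgroup_fg_general {A : Type} :
    (∀ H : Subgroup (FreeGroup A), IsRational (H : Set (FreeGroup A)) → H.FG) ∧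
    (∀ N : Subgroup (FreeGroup A), N.Normal → IsRational (N : Set (FreeGroup A)) →
      ∃ E : Finset (FreeGroup A), Subgroup.normalClosure (E : Set (FreeGroup A)) = N) := by
  refine ⟨fun H h => Subgroup.fg_of_isRational h, fun N hN h => ?_⟩
  obtain ⟨E, hE⟩ := Subgroup.fg_of_isRational h
  exact ⟨E, by
    rw [← Subgroup.normalClosure_closure_eq_normalClosure, hE, Subgroup.normalClosure_eq_self]⟩

/-- Anisimov–Seifert: a subgroup of a finitely generated free group that is a rational
subset is finitely generated; consequently, a group presented by a rational normal
subgroup of relations is finitely presented (the normal subgroup is the normal closure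
of a finite set). -/
theorem rational_subgroup_fg {A : Type} [Finite A] :
    (∀ H : Subgroup (FreeGroup A), IsRational (H : Set (FreeGroup A)) → H.FG) ∧
    (∀ N : Subgroup (FreeGroup A), N.Normal → IsRational (N : Set (FreeGroup A)) →
      ∃ E : Finset (FreeGroup A), Subgroup.normalClosure (E : Set (FreeGroup A)) = N) :=
  rational_subgroup_fg_general
end

section
/- Let S be a semigroup, A a finite generating set, μ : A⁺ → S the canonical homomorphism, L ⊆ A⁺ with μ(L) = S, and suppose there is a function l : A⁺ → L such that μ(l(u)) = μ(u) for all u, and (l(u), l(ua)) ∈ R_a for all u ∈ A⁺, a ∈ A (where R_a = {(u,v) ∈ L×L | μ(ua)=μ(v)}), with R = {(u,v) ∈ L×L | μ(u)=μ(v)}. Let ≡ be the semigroup congruence on A⁺ generated by T = ⋃_{a∈A} {(ua,v) | (u,v) ∈ R_a} ∪ R ∪ {(a, l(a)) | a ∈ A}. Then for all u, v ∈ A⁺: u ≡ v if and only if μ(u) = μ(v). In particular ⟨A ; T⟩ is a presentation of S. -/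
/-!
Every word `u` is `≡`-equivalent to its representative `l u`: by induction on the length,
`u a ≡ l(u) a ≡ l(u a)`, the second step being a relation of the first kind in `T`.
Two words with the same image then have representatives related by `R`, while every
relation in `T` holds in `S`, so `≡` is exactly the kernel of `μ`.
-/

namespace FreeSemigroup

variable {A : Type*}

@[elab_as_elim]
theorem induction_on_mul_of {C : FreeSemigroup A → Prop} (u : FreeSemigroup A)
    (of : ∀ a, C (of a)) (mul_of : ∀ u a, C u → C (u * FreeSemigroup.of a)) : C u := by
  obtain ⟨a, as⟩ := u
  induction as using List.reverseRecOn with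
  | nil => exact of a
  | append_singleton as b ih => exact mul_of ⟨a, as⟩ b ih

theorem con_rel_of_rel_mul_of {c : Con (FreeSemigroup A)} {f : FreeSemigroup A → FreeSemigroup A}
    (rel_of : ∀ a, c (of a) (f (of a))) (rel_mul_of : ∀ u a, c (f u * of a) (f (u * of a)))
    (u : FreeSemigroup A) : c u (f u) :=
  induction_on_mul_of u rel_of fun u a ih => c.trans (c.mul ih (c.refl _)) (rel_mul_of u a)

end FreeSemigroup

theorem quasiAutomatic_presentation_general {A S : Type} [Semigroup S]
    (μ : FreeSemigroup A →ₙ* S)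
    (L : Set (FreeSemigroup A))
    (l : FreeSemigroup A → FreeSemigroup A)
    (hlL : ∀ u : FreeSemigroup A, l u ∈ L)
    (hlμ : ∀ u : FreeSemigroup A, μ (l u) = μ u)
    (hla : ∀ (u : FreeSemigroup A) (a : A),
      μ (l u * FreeSemigroup.of a) = μ (l (u * FreeSemigroup.of a))) :
    ∀ u v : FreeSemigroup A,
      conGen (fun x y =>
        (∃ (a : A) (p q : FreeSemigroup A), p ∈ L ∧ q ∈ L ∧
            μ (p * FreeSemigroup.of a) = μ q ∧ x = p * FreeSemigroup.of a ∧ y = q)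
        ∨ (x ∈ L ∧ y ∈ L ∧ μ x = μ y)
        ∨ (∃ a : A, x = FreeSemigroup.of a ∧ y = l (FreeSemigroup.of a))) u v
      ↔ μ u = μ v := by
  intro u v
  set c : Con (FreeSemigroup A) := conGen _
  have rel_l : ∀ w, c w (l w) :=
    FreeSemigroup.con_rel_of_rel_mul_of (fun a => .of _ _ (.inr (.inr ⟨a, rfl, rfl⟩)))
      (fun w a => .of _ _ (.inl ⟨a, _, _, hlL w, hlL _, hla w a, rfl, rfl⟩))
  have c_le_ker : c ≤ Con.ker μ := by
    refine Con.conGen_le.mpr ?_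
    rintro x y (⟨a, p, q, -, -, hpq, rfl, rfl⟩ | ⟨-, -, hxy⟩ | ⟨a, rfl, rfl⟩)
    · exact hpq
    · exact hxy
    · exact (hlμ _).symm
  refine ⟨fun h => c_le_ker h, fun h => ?_⟩
  have rel_ll : c (l u) (l v) := .of _ _ (.inr (.inl ⟨hlL u, hlL v, by rw [hlμ, hlμ, h]⟩))
  exact (rel_l u).trans (rel_ll.trans (rel_l v).symm)

/-- The congruence generated by `T = ⋃_a {(ua,v) | (u,v) ∈ R_a} ∪ R ∪ {(a, l(a))}`
coincides with the kernel of `μ`: for all `u, v ∈ A⁺`, `u ≡ v` iff `μ(u) = μ(v)`.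
In particular `⟨A ; T⟩` is a presentation of `S`. -/
theorem quasiAutomatic_presentation {A S : Type} [Finite A] [Semigroup S]
    (μ : FreeSemigroup A →ₙ* S) (hμ : Function.Surjective μ)
    (L : Set (FreeSemigroup A))
    (l : FreeSemigroup A → FreeSemigroup A)
    (hlL : ∀ u : FreeSemigroup A, l u ∈ L)
    (hlμ : ∀ u : FreeSemigroup A, μ (l u) = μ u)
    (hla : ∀ (u : FreeSemigroup A) (a : A),
      μ (l u * FreeSemigroup.of a) = μ (l (u * FreeSemigroup.of a))) :
    ∀ u v : FreeSemigroup A,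
      conGen (fun x y =>
        (∃ (a : A) (p q : FreeSemigroup A), p ∈ L ∧ q ∈ L ∧
            μ (p * FreeSemigroup.of a) = μ q ∧ x = p * FreeSemigroup.of a ∧ y = q)
        ∨ (x ∈ L ∧ y ∈ L ∧ μ x = μ y)
        ∨ (∃ a : A, x = FreeSemigroup.of a ∧ y = l (FreeSemigroup.of a))) u v
      ↔ μ u = μ v :=
  quasiAutomatic_presentation_general μ L l hlL hlμ hla
end
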